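/- arXiv:2305.11762 — 5 statements merged into one kernel-verified Lean document; each statement's English description precedes it below -/
import Mathlib

section
/- Let k be a field with char k ≠ 2, and let Q = ABA'B' be a quadrilateral (four lines, no two adjacent sides parallel, not all through one point). Then the symmetric bilinear form ⟨v,w⟩_Q = vᵀ [[γ, -β],[-β, α]] w on k², with α, β, γ defined from the side coefficients as in Definition 2.1 of the paper, is nondegenerate. -/
/-- Lemma 2.2: the inner product `⟨v,w⟩_Q = vᵀ [[γ,-β],[-β,α]] w` associated to a
quadrilateral `Q = ABA'B'` (adjacent sides not parallel) is nondegenerate. -/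
theorem inner_product_Q_nondegenerate {k : Type*} [Field k] (hchar : (2 : k) ≠ 0)
    (tA uA tB uB tA' uA' tB' uB' : k)
    (hAB : tA*uB - tB*uA ≠ 0) (hBA' : tB*uA' - tA'*uB ≠ 0)
    (hA'B' : tA'*uB' - tB'*uA' ≠ 0) (hB'A : tB'*uA - tA*uB' ≠ 0) :
    ∀ v : k × k,
      (∀ w : k × k,
        (tA*tB*tA'*uB' - tA*tB*uA'*tB' + tA*uB*tA'*tB' - uA*tB*tA'*tB') * v.1 * w.1
        - (tA*uB*tA'*uB' - uA*tB*uA'*tB') * v.1 * w.2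
        - (tA*uB*tA'*uB' - uA*tB*uA'*tB') * v.2 * w.1
        + (tA*uB*uA'*uB' - uA*tB*uA'*uB' + uA*uB*tA'*uB' - uA*uB*uA'*tB') * v.2 * w.2
        = 0) → v = 0 := by
  intro v h
  have key : (tA*uB - tB*uA)*((tB*uA' - tA'*uB)*((tA'*uB' - tB'*uA')*(tB'*uA - tA*uB'))) ≠ 0 :=
    mul_ne_zero hAB (mul_ne_zero hBA' (mul_ne_zero hA'B' hB'A))
  have h1 := h (1, 0)
  have h2 := h (0, 1)
  simp only [mul_one, mul_zero, add_zero, sub_zero, zero_sub, zero_add] at h1 h2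
  have hv1 : v.1 * ((tA*uB - tB*uA)*((tB*uA' - tA'*uB)*((tA'*uB' - tB'*uA')*(tB'*uA - tA*uB')))) = 0 := by
    linear_combination (-(tA*uB*uA'*uB' - uA*tB*uA'*uB' + uA*uB*tA'*uB' - uA*uB*uA'*tB'))*h1 - (tA*uB*tA'*uB' - uA*tB*uA'*tB')*h2
  have hv2 : v.2 * ((tA*uB - tB*uA)*((tB*uA' - tA'*uB)*((tA'*uB' - tB'*uA')*(tB'*uA - tA*uB')))) = 0 := by
    linear_combination (-(tA*uB*tA'*uB' - uA*tB*uA'*tB'))*h1 - (tA*tB*tA'*uB' - tA*tB*uA'*tB' + tA*uB*tA'*tB' - uA*tB*tA'*tB')*h2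
  have e1 : v.1 = 0 := by
    rcases mul_eq_zero.mp hv1 with h' | h'
    · exact h'
    · exact absurd h' key
  have e2 : v.2 = 0 := by
    rcases mul_eq_zero.mp hv2 with h' | h'
    · exact h'
    · exact absurd h' key
  exact Prod.ext e1 e2
end

section
/- Let k be a field with char k ≠ 2. Let Q = ABA'B' be a quadrilateral in standard form (A: Y=0, A': X=0, B: Y = t_B X + v_B, B': Y = t_{B'} X + v_{B'}, t_B t_{B'} = μ ≠ 0, B and B' not passing through both axes' intersection simultaneously with a side), with centroid (h,k₀) where -4hμ = t_{B'} v_B + t_B v_{B'} and 4k₀ = v_B + v_{B'}. If (h,k₀) ≠ (0,0), then the line ℓ: k₀ Y + μ h X = 0 bisects Q with midpoint (0,0); that is, ℓ passes through A·A' = (0,0), and whenever ℓ crosses the pair {B, B'}, the midpoint of its two intersection points with B and B' is (0,0). -/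
/-- Proposition 4.6(3), main computation: for a quadrilateral in standard form
with coefficient `μ = t_B t_{B'} ≠ 0` and centroid `(h, k₀) ≠ (0,0)`
(`-4hμ = t_{B'}v_B + t_B v_{B'}`, `4k₀ = v_B + v_{B'}`), the line
`ℓ : k₀ Y + μ h X = 0` passes through `A·A' = (0,0)`, and whenever it crosses
the pair `{B, B'}` (the non-parallelism conditions `μh + t_B k₀ ≠ 0`,
`μh + t_{B'} k₀ ≠ 0`), the midpoint of its intersection points with `B` and
`B'` is `(0,0)`; i.e. `ℓ` bisects `Q` with midpoint `(0,0)`. -/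
theorem origin_bisector {k : Type*} [Field k] (hchar : (2 : k) ≠ 0)
    (tB tB' vB vB' μ h k₀ : k)
    (htB : tB ≠ 0) (htB' : tB' ≠ 0)
    (hμ : μ = tB * tB')
    (hcent1 : -(4 * h * μ) = tB' * vB + tB * vB')
    (hcent2 : 4 * k₀ = vB + vB')
    (hne : (h, k₀) ≠ (0, 0))
    (hd1 : μ * h + tB * k₀ ≠ 0) (hd2 : μ * h + tB' * k₀ ≠ 0) :
    (k₀ * 0 + μ * h * 0 = 0) ∧
    ∀ x₁ y₁ x₂ y₂ : k,
      k₀ * y₁ + μ * h * x₁ = 0 → y₁ = tB * x₁ + vB →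
      k₀ * y₂ + μ * h * x₂ = 0 → y₂ = tB' * x₂ + vB' →
      ((x₁ + x₂) / 2, (y₁ + y₂) / 2) = ((0 : k), (0 : k)) := by
  refine ⟨by ring, ?_⟩
  intro x₁ y₁ x₂ y₂ hl1 hb1 hl2 hb2
  have e1 : (μ * h + tB * k₀) * x₁ = -(k₀ * vB) := by
    rw [hb1] at hl1; linear_combination hl1
  have e2 : (μ * h + tB' * k₀) * x₂ = -(k₀ * vB') := by
    rw [hb2] at hl2; linear_combination hl2
  have key : (μ * h + tB * k₀) * ((μ * h + tB' * k₀) * (x₁ + x₂)) = 0 := by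
    linear_combination (μ * h + tB' * k₀) * e1 + (μ * h + tB * k₀) * e2
      + k₀ * μ * h * hcent2 + k₀ ^ 2 * hcent1
  have hx : x₁ + x₂ = 0 := by
    rcases mul_eq_zero.mp key with h' | h'
    · exact absurd h' hd1
    · rcases mul_eq_zero.mp h' with h'' | h''
      · exact absurd h'' hd2
      · exact h''
  have hy : y₁ + y₂ = 0 := by
    by_cases hk : k₀ = 0
    · subst hk
      have hμh : μ * h ≠ 0 := by simpa using hd1
      have hx1 : x₁ = 0 := by
        have h0 : μ * h * x₁ = 0 := by linear_combination e1
        rcases mul_eq_zero.mp h0 with h' | h'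
        · exact absurd h' hμh
        · exact h'
      have hx2 : x₂ = 0 := by
        have h0 : μ * h * x₂ = 0 := by linear_combination e2
        rcases mul_eq_zero.mp h0 with h' | h'
        · exact absurd h' hμh
        · exact h'
      rw [hb1, hb2, hx1, hx2]
      linear_combination -hcent2
    · have : k₀ * (y₁ + y₂) = 0 := by linear_combination hl1 + hl2 - μ * h * hx
      rcases mul_eq_zero.mp this with h' | h'
      · exact absurd h' hk
      · exact h'
  rw [hx, hy]
  simp
end

section
/- Let k be a field with char k ≠ 2, and let Q be a quadrilateral in standard form with centroid (0,0). Then B and B' are parallel with v_B = -v_{B'}, and every line through the origin bisects Q with midpoint (0,0). -/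
/-- Proposition 4.6(2): if a quadrilateral in standard form
(`A : Y = 0`, `A' : X = 0`, `B : Y = t_B X + v_B`, `B' : Y = t_{B'} X + v_{B'}`,
`(v_B, v_{B'}) ≠ (0,0)`) has centroid `(0,0)` (i.e. `t_{B'}v_B + t_B v_{B'} = 0`
and `v_B + v_{B'} = 0`), then `B` and `B'` are parallel with `v_B = -v_{B'}`,
and every line `aX + bY = 0` through the origin bisects `Q` with midpoint
`(0,0)`: whenever such a line meets `B` and `B'` (non-parallel case
`a + b t_B ≠ 0`), the midpoint of the intersection points is `(0,0)`; and in
the parallel case the origin lies on the midline `Y = t_B X + (v_B+v_{B'})/2`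
of `B` and `B'`. -/
theorem centroid_origin_case {k : Type*} [Field k] (hchar : (2 : k) ≠ 0)
    (tB tB' vB vB' : k)
    (htB : tB ≠ 0) (htB' : tB' ≠ 0) (hv : (vB, vB') ≠ (0, 0))
    (hcent1 : tB' * vB + tB * vB' = 0)
    (hcent2 : vB + vB' = 0) :
    tB = tB' ∧ vB = -vB' ∧
    (∀ a b x₁ y₁ x₂ y₂ : k, (a, b) ≠ (0, 0) → a + b * tB ≠ 0 →
      a * x₁ + b * y₁ = 0 → y₁ = tB * x₁ + vB →
      a * x₂ + b * y₂ = 0 → y₂ = tB' * x₂ + vB' →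
      ((x₁ + x₂) / 2, (y₁ + y₂) / 2) = ((0 : k), (0 : k))) ∧
    (tB * 0 + (vB + vB') / 2 = 0) := by
  have hvB' : vB' = -vB := by linear_combination hcent2
  have hvB : vB ≠ 0 := by
    intro h
    exact hv (by simp [h, hvB', Prod.ext_iff])
  have htt : tB = tB' := by
    have h := hcent1
    rw [hvB'] at h
    have : vB * (tB' - tB) = 0 := by ring_nf; linear_combination h
    rcases mul_eq_zero.mp this with h1 | h1
    · exact absurd h1 hvB
    · exact (sub_eq_zero.mp h1).symm
  refine ⟨htt, by linear_combination hcent2, ?_, by simp [hcent2]⟩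
  intro a b x₁ y₁ x₂ y₂ _ hden h1 h2 h3 h4
  have hx1 : (a + b * tB) * x₁ = -b * vB := by linear_combination h1 - b * h2
  have hx2 : (a + b * tB) * x₂ = b * vB := by
    rw [htt]
    have hden' : a + b * tB' ≠ 0 := by rwa [htt] at hden
    linear_combination h3 - b * h4 - b * hvB'
  have hxsum : x₁ + x₂ = 0 := by
    have : (a + b * tB) * (x₁ + x₂) = 0 := by linear_combination hx1 + hx2
    exact (mul_eq_zero.mp this).resolve_left hden
  have hysum : y₁ + y₂ = 0 := by
    rw [h2, h4, ← htt]
    linear_combination tB * hxsum + hcent2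
  simp [hxsum, hysum, Prod.ext_iff]
end

section
/- Let k be a field with char k ≠ 2. Let Q be a quadrilateral, and suppose two distinct lines ℓ, ℓ' are both bisectors of Q sharing the same midpoint p. Then the vertices of Q are the vertices of a parallelogram, and p is the centroid of Q. -/
/-- A line `aX + bY + c = 0` in the plane `k²`. -/
structure Line (k : Type*) [Field k] where
  a : k
  b : k
  c : k
  nd : (a, b) ≠ (0, 0)

namespace Line

variable {k : Type*} [Field k]

/-- The set of points of a line. -/
def pts (L : Line k) : Set (k × k) := {P | L.a * P.1 + L.b * P.2 + L.c = 0}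

/-- Two lines are parallel (or equal) if their coefficient vectors are proportional. -/
def Parallel (L M : Line k) : Prop := L.a * M.b - M.a * L.b = 0

/-- The intersection point of two (non-parallel) lines, by Cramer's rule. -/
noncomputable def inter (L M : Line k) : k × k :=
  ((L.b * M.c - M.b * L.c) / (L.a * M.b - M.a * L.b),
   (M.a * L.c - L.a * M.c) / (L.a * M.b - M.a * L.b))

end Line

/-- A (possibly improper) quadrilateral: four distinct lines, adjacent sides not
parallel, not all four through one point. -/
structure Quadrilateral (k : Type*) [Field k] where
  A : Line k
  B : Line k
  A' : Line k
  B' : Line k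
  dAB : A.pts ≠ B.pts
  dAA' : A.pts ≠ A'.pts
  dAB' : A.pts ≠ B'.pts
  dBA' : B.pts ≠ A'.pts
  dBB' : B.pts ≠ B'.pts
  dA'B' : A'.pts ≠ B'.pts
  adjAB : ¬ A.Parallel B
  adjBA' : ¬ B.Parallel A'
  adjA'B' : ¬ A'.Parallel B'
  adjB'A : ¬ B'.Parallel A
  notConcurrent : ¬ ∃ P : k × k, P ∈ A.pts ∧ P ∈ B.pts ∧ P ∈ A'.pts ∧ P ∈ B'.pts

namespace Quadrilateral

variable {k : Type*} [Field k]

noncomputable def v1 (Q : Quadrilateral k) : k × k := Q.A.inter Q.B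
noncomputable def v2 (Q : Quadrilateral k) : k × k := Q.B.inter Q.A'
noncomputable def v3 (Q : Quadrilateral k) : k × k := Q.A'.inter Q.B'
noncomputable def v4 (Q : Quadrilateral k) : k × k := Q.B'.inter Q.A

/-- The centroid: the mean of the four vertices. -/
noncomputable def centroid (Q : Quadrilateral k) : k × k :=
  ((4 : k)⁻¹) • (Q.v1 + Q.v2 + Q.v3 + Q.v4)

end Quadrilateral

/-- `ℓ` bisects the pair `{L, L'}` with finite midpoint `p`: whenever `ℓ`
crosses the pair (is distinct from both lines and not parallel to both), it
must meet each of them in a finite point and the midpoint of the two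
intersection points is `p`. -/
def BisectsPair {k : Type*} [Field k] (ℓ L L' : Line k) (p : k × k) : Prop :=
  ℓ.pts ≠ L.pts → ℓ.pts ≠ L'.pts → ¬(ℓ.Parallel L ∧ ℓ.Parallel L') →
    ¬ ℓ.Parallel L ∧ ¬ ℓ.Parallel L' ∧
      ((2 : k)⁻¹) • (ℓ.inter L + ℓ.inter L') = p

/-- `ℓ` bisects the quadrilateral `Q` with midpoint `p`: it bisects both pairs
of opposite sides with the same midpoint `p`. -/
def Bisects {k : Type*} [Field k] (Q : Quadrilateral k) (ℓ : Line k) (p : k × k) : Prop :=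
  BisectsPair ℓ Q.A Q.A' p ∧ BisectsPair ℓ Q.B Q.B' p

/-- The multiset `s` of four points consists of the vertices of a parallelogram. -/
def IsParallelogramVertices {k : Type*} [Field k] (s : Multiset (k × k)) : Prop :=
  ∃ w x y z : k × k, s = {w, x, y, z} ∧ w - x = z - y ∧ w ≠ x ∧ w ≠ z ∧ x ≠ z

/-!
Let `σ` be the point reflection in `p`. Every bisector passes through `p`. Take a pair of
opposite sides `{A, A'}`. If `A ∥ A'`, a bisector crossing the pair shows `σ A = A'`, and a
bisector not crossing it is parallel to `A`; the latter cannot hold for both `ℓ` and `ℓ'`, two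
distinct lines through `p`. If `A ∦ A'`, every bisector passes through `p` and through the point
`σ A ∩ A'`, so that point is `p`, and `p ∈ A ∩ A'`. So each pair of opposite sides is either
swapped by `σ` or consists of two lines through `p`, and by non-concurrency not both pairs are of
the second kind. In each remaining case `σ` acts on the vertices as two disjoint transpositions:
the vertices split into two pairs with midpoint `p`, the diagonals of a parallelogram centred
at `p`.
-/

namespace Line

variable {k : Type*} [Field k] {ℓ L L' M M' N : Line k} {p x y : k × k}

theorem mem_pts : x ∈ L.pts ↔ L.a * x.1 + L.b * x.2 + L.c = 0 :=
  Iff.rfl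

theorem eq_zero_of_mul_a_eq_zero_of_mul_b_eq_zero {t : k} (ha : t * L.a = 0)
    (hb : t * L.b = 0) : t = 0 := by
  by_contra ht
  exact L.nd (Prod.ext ((mul_eq_zero.1 ha).resolve_left ht) ((mul_eq_zero.1 hb).resolve_left ht))

theorem Parallel.symm (h : L.Parallel M) : M.Parallel L := by
  unfold Parallel at *
  linear_combination -h

theorem Parallel.trans (h₁ : L.Parallel M) (h₂ : M.Parallel N) : L.Parallel N := by
  unfold Parallel at *
  exact eq_zero_of_mul_a_eq_zero_of_mul_b_eq_zero (L := M)
    (by linear_combination L.a * h₂ + N.a * h₁) (by linear_combination N.b * h₁ + L.b * h₂)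

theorem inter_mem_left (h : ¬ L.Parallel M) : L.inter M ∈ L.pts := by
  simp only [mem_pts, inter, div_eq_mul_inv]
  linear_combination (-L.c) * mul_inv_cancel₀ h

theorem inter_mem_right (h : ¬ L.Parallel M) : L.inter M ∈ M.pts := by
  simp only [mem_pts, inter, div_eq_mul_inv]
  linear_combination (-M.c) * mul_inv_cancel₀ h

theorem eq_inter (h : ¬ L.Parallel M) (hL : x ∈ L.pts) (hM : x ∈ M.pts) : x = L.inter M := by
  have hd : L.a * M.b - M.a * L.b ≠ 0 := h
  rw [mem_pts] at hL hM
  ext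
  · rw [inter, eq_div_iff hd]
    linear_combination M.b * hL - L.b * hM
  · rw [inter, eq_div_iff hd]
    linear_combination L.a * hM - M.a * hL

theorem inter_comm (L M : Line k) : L.inter M = M.inter L := by
  simp only [inter, Prod.ext_iff, ← neg_div_neg_eq _ (L.a * M.b - M.a * L.b)]
  constructor <;> ring_nf

theorem parallel_of_pts_eq (h : L.pts = M.pts) : L.Parallel M := by
  by_contra hLM
  have hx : L.inter M + (-L.b, L.a) ∈ M.pts := by
    have := inter_mem_left hLM
    rw [← h, mem_pts] at *
    simp only [Prod.fst_add, Prod.snd_add]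
    linear_combination this
  have := inter_mem_right hLM
  rw [mem_pts] at hx this
  simp only [Prod.fst_add, Prod.snd_add] at hx
  exact hLM (by unfold Parallel; linear_combination hx - this)

theorem pts_subset_of_parallel_of_mem (h : L.Parallel M) (hL : x ∈ L.pts) (hM : x ∈ M.pts) :
    L.pts ⊆ M.pts := fun z hz => by
  unfold Parallel at h
  rw [mem_pts] at *
  exact eq_zero_of_mul_a_eq_zero_of_mul_b_eq_zero (L := L)
    (by linear_combination M.a * hz - M.a * hL + L.a * hM + (z.2 - x.2) * h)
    (by linear_combination M.b * hz - M.b * hL + L.b * hM - (z.1 - x.1) * h)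

theorem pts_eq_of_parallel_of_mem (h : L.Parallel M) (hL : x ∈ L.pts) (hM : x ∈ M.pts) :
    L.pts = M.pts :=
  (pts_subset_of_parallel_of_mem h hL hM).antisymm (pts_subset_of_parallel_of_mem h.symm hM hL)

theorem pts_eq_of_mem_of_mem (hxy : x ≠ y) (hxL : x ∈ L.pts) (hyL : y ∈ L.pts)
    (hxM : x ∈ M.pts) (hyM : y ∈ M.pts) : L.pts = M.pts := by
  have hLM : L.Parallel M := by
    by_contra h
    exact hxy ((eq_inter h hxL hxM).trans (eq_inter h hyL hyM).symm)
  exact pts_eq_of_parallel_of_mem hLM hxL hxM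

theorem mem_pts_of_add_eq_two_smul (hchar : (2 : k) ≠ 0) (hx : x ∈ L.pts) (hy : y ∈ L.pts)
    (h : x + y = (2 : k) • p) : p ∈ L.pts := by
  have h₁ : x.1 + y.1 = 2 * p.1 := congrArg Prod.fst h
  have h₂ : x.2 + y.2 = 2 * p.2 := congrArg Prod.snd h
  rw [mem_pts] at *
  exact (mul_eq_zero.1 (by linear_combination hx + hy - L.a * h₁ - L.b * h₂ :
    (2 : k) * (L.a * p.1 + L.b * p.2 + L.c) = 0)).resolve_left hchar

/-- The image of `L` under the point reflection `x ↦ 2p - x`. -/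
def reflect (L : Line k) (p : k × k) : Line k :=
  ⟨L.a, L.b, -L.c - 2 * (L.a * p.1 + L.b * p.2), L.nd⟩

theorem mem_reflect_iff : x ∈ (L.reflect p).pts ↔ (2 : k) • p - x ∈ L.pts := by
  simp only [mem_pts, reflect, Prod.fst_sub, Prod.snd_sub, Prod.smul_fst, Prod.smul_snd,
    smul_eq_mul]
  constructor <;> intro h <;> linear_combination -h

theorem reflect_parallel (L : Line k) (p : k × k) : (L.reflect p).Parallel L := by
  unfold Parallel reflect
  ring

theorem reflect_pts_of_mem (hp : p ∈ L.pts) : (L.reflect p).pts = L.pts := by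
  refine pts_eq_of_parallel_of_mem (reflect_parallel L p) ?_ hp
  rwa [mem_reflect_iff, two_smul, add_sub_cancel_right]

theorem reflect_pts_symm (h : (L.reflect p).pts = L'.pts) : (L'.reflect p).pts = L.pts := by
  ext x
  rw [mem_reflect_iff, ← h, mem_reflect_iff, sub_sub_cancel]

theorem mem_reflect_of_add_eq (h : x + y = (2 : k) • p) (hx : x ∈ L.pts) :
    y ∈ (L.reflect p).pts := by
  rwa [mem_reflect_iff, ← h, add_sub_cancel_right]

theorem inter_add_inter_of_reflect (hL : (L.reflect p).pts = L'.pts)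
    (hM : (M.reflect p).pts = M'.pts) (h : ¬ L.Parallel M) (h' : ¬ L'.Parallel M') :
    L.inter M + L'.inter M' = (2 : k) • p := by
  have hL' := inter_mem_left h'
  have hM' := inter_mem_right h'
  rw [← hL, mem_reflect_iff] at hL'
  rw [← hM, mem_reflect_iff] at hM'
  rw [← eq_inter h hL' hM', sub_add_cancel]

/-- The hypotheses of `BisectsPair`. -/
def Crosses (ℓ L L' : Line k) : Prop :=
  ℓ.pts ≠ L.pts ∧ ℓ.pts ≠ L'.pts ∧ ¬(ℓ.Parallel L ∧ ℓ.Parallel L')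

theorem crosses_of_not_parallel (h : ¬ ℓ.Parallel L) (h' : ¬ ℓ.Parallel L') :
    ℓ.Crosses L L' :=
  ⟨fun e => h (parallel_of_pts_eq e), fun e => h' (parallel_of_pts_eq e), fun hc => h hc.1⟩

theorem parallel_of_not_crosses (hLL' : L.Parallel L') (h : ¬ ℓ.Crosses L L') :
    ℓ.Parallel L := by
  unfold Crosses at h
  by_cases hL : ℓ.pts = L.pts
  · exact parallel_of_pts_eq hL
  by_cases hL' : ℓ.pts = L'.pts
  · exact (parallel_of_pts_eq hL').trans hLL'.symm
  exact (not_not.1 fun hc => h ⟨hL, hL', hc⟩).1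

end Line

open Line

theorem isParallelogramVertices_of_add_eq {k : Type*} [Field k] {a b c d : k × k}
    (h : a + b = c + d) (hac : a ≠ c) (had : a ≠ d) (hcd : c ≠ d) :
    IsParallelogramVertices ({a, c, b, d} : Multiset (k × k)) :=
  ⟨a, c, b, d, rfl, by rw [sub_eq_sub_iff_add_eq_add, h, add_comm], hac, had, hcd⟩

namespace Quadrilateral

variable {k : Type*} [Field k] (Q : Quadrilateral k) {ℓ ℓ' : Line k} {p : k × k}

def rotate : Quadrilateral k where
  A := Q.B
  B := Q.A'
  A' := Q.B'
  B' := Q.A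
  dAB := Q.dBA'
  dAA' := Q.dBB'
  dAB' := Q.dAB.symm
  dBA' := Q.dA'B'
  dBB' := Q.dAA'.symm
  dA'B' := Q.dAB'.symm
  adjAB := Q.adjBA'
  adjBA' := Q.adjA'B'
  adjA'B' := Q.adjB'A
  adjB'A := Q.adjAB
  notConcurrent := fun ⟨P, hB, hA', hB', hA⟩ => Q.notConcurrent ⟨P, hA, hB, hA', hB'⟩

theorem vertices_rotate :
    ({Q.rotate.v1, Q.rotate.v2, Q.rotate.v3, Q.rotate.v4} : Multiset (k × k)) =
      {Q.v1, Q.v2, Q.v3, Q.v4} := by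
  show ({Q.v2, Q.v3, Q.v4, Q.v1} : Multiset (k × k)) = _
  rw [Multiset.pair_comm Q.v4 Q.v1]
  simp only [Multiset.insert_eq_cons, Multiset.cons_swap _ Q.v1]

theorem centroid_rotate : Q.rotate.centroid = Q.centroid := by
  unfold centroid
  congr 1
  show Q.v2 + Q.v3 + Q.v4 + Q.v1 = _
  abel

theorem v1_mem_A : Q.v1 ∈ Q.A.pts := inter_mem_left Q.adjAB
theorem v1_mem_B : Q.v1 ∈ Q.B.pts := inter_mem_right Q.adjAB
theorem v2_mem_A' : Q.v2 ∈ Q.A'.pts := inter_mem_right Q.adjBA'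
theorem v3_mem_A' : Q.v3 ∈ Q.A'.pts := inter_mem_left Q.adjA'B'
theorem v3_mem_B' : Q.v3 ∈ Q.B'.pts := inter_mem_right Q.adjA'B'
theorem v4_mem_A : Q.v4 ∈ Q.A.pts := inter_mem_right Q.adjB'A

theorem v1_ne_v3 : Q.v1 ≠ Q.v3 := fun h =>
  Q.notConcurrent ⟨Q.v1, Q.v1_mem_A, Q.v1_mem_B, h ▸ Q.v3_mem_A', h ▸ Q.v3_mem_B'⟩

theorem v2_ne_v4 : Q.v2 ≠ Q.v4 :=
  Q.rotate.v1_ne_v3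

theorem v3_ne_v4_of_v1_eq_v2 (h12 : Q.v1 = Q.v2) : Q.v3 ≠ Q.v4 := fun h34 => by
  by_cases h13 : Q.v1 = Q.v3
  · exact Q.v1_ne_v3 h13
  · exact Q.dAA' (pts_eq_of_mem_of_mem h13 Q.v1_mem_A (h34 ▸ Q.v4_mem_A) (h12 ▸ Q.v2_mem_A')
      Q.v3_mem_A')

theorem v2_ne_v3_of_v1_eq_v4 (h14 : Q.v1 = Q.v4) : Q.v2 ≠ Q.v3 := fun h23 =>
  Q.rotate.v3_ne_v4_of_v1_eq_v2 h23 h14.symm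

theorem parallelogram_centroid_of_add_eq (hchar : (2 : k) ≠ 0) {a b c d : k × k}
    (hv : ({Q.v1, Q.v2, Q.v3, Q.v4} : Multiset (k × k)) = {a, c, b, d})
    (hab : a + b = (2 : k) • p) (hcd : c + d = (2 : k) • p)
    (hac : a ≠ c) (had : a ≠ d) (hcd' : c ≠ d) :
    IsParallelogramVertices ({Q.v1, Q.v2, Q.v3, Q.v4} : Multiset (k × k)) ∧ p = Q.centroid := by
  refine ⟨hv ▸ isParallelogramVertices_of_add_eq (hab.trans hcd.symm) hac had hcd', ?_⟩
  have h4 : (4 : k) ≠ 0 := by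
    rw [show (4 : k) = 2 * 2 by norm_num]
    exact mul_ne_zero hchar hchar
  have hsum : Q.v1 + Q.v2 + Q.v3 + Q.v4 = (4 : k) • p := by
    have hv_sum := congrArg Multiset.sum hv
    simp only [Multiset.insert_eq_cons, Multiset.sum_cons, Multiset.sum_singleton] at hv_sum
    calc Q.v1 + Q.v2 + Q.v3 + Q.v4 = (a + b) + (c + d) := by
          rw [add_assoc, add_assoc, hv_sum]; abel
      _ = (4 : k) • p := by rw [hab, hcd, ← add_smul]; norm_num
  rw [centroid, hsum, smul_smul, inv_mul_cancel₀ h4, one_smul]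

end Quadrilateral

section Bisection

variable {k : Type*} [Field k] {Q : Quadrilateral k} {ℓ L L' : Line k} {p : k × k}

theorem BisectsPair.symm (h : BisectsPair ℓ L L' p) : BisectsPair ℓ L' L p := by
  intro h₁ h₂ h₃
  obtain ⟨hL, hL', hmid⟩ := h h₂ h₁ (fun hc => h₃ hc.symm)
  exact ⟨hL', hL, by rw [← hmid, add_comm]⟩

theorem BisectsPair.of_crosses (hchar : (2 : k) ≠ 0) (h : BisectsPair ℓ L L' p)
    (hc : ℓ.Crosses L L') :
    ¬ ℓ.Parallel L ∧ ¬ ℓ.Parallel L' ∧ ℓ.inter L + ℓ.inter L' = (2 : k) • p := by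
  obtain ⟨hL, hL', hmid⟩ := h hc.1 hc.2.1 hc.2.2
  exact ⟨hL, hL', by rw [← hmid, smul_smul, mul_inv_cancel₀ hchar, one_smul]⟩

theorem BisectsPair.mem_pts_of_crosses (hchar : (2 : k) ≠ 0) (h : BisectsPair ℓ L L' p)
    (hc : ℓ.Crosses L L') : p ∈ ℓ.pts :=
  have ⟨hL, hL', hsum⟩ := h.of_crosses hchar hc
  mem_pts_of_add_eq_two_smul hchar (inter_mem_left hL) (inter_mem_left hL') hsum

theorem BisectsPair.reflect_eq_or_parallel (hchar : (2 : k) ≠ 0) (h : BisectsPair ℓ L L' p)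
    (hLL' : L.Parallel L') : (L.reflect p).pts = L'.pts ∨ ℓ.Parallel L := by
  by_cases hc : ℓ.Crosses L L'
  · obtain ⟨hL, hL', hsum⟩ := h.of_crosses hchar hc
    exact Or.inl (pts_eq_of_parallel_of_mem ((reflect_parallel L p).trans hLL')
      (mem_reflect_of_add_eq hsum (inter_mem_right hL)) (inter_mem_right hL'))
  · exact Or.inr (parallel_of_not_crosses hLL' hc)

theorem BisectsPair.reflect_inter_mem (hchar : (2 : k) ≠ 0) (h : BisectsPair ℓ L L' p)
    (hp : p ∈ ℓ.pts) (hLL' : ¬ L.Parallel L') : (L.reflect p).inter L' ∈ ℓ.pts := by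
  have hσ : ¬ (L.reflect p).Parallel L' := fun h => hLL' ((reflect_parallel L p).symm.trans h)
  by_cases hL : ℓ.pts = L.pts
  · rw [hL] at hp ⊢
    rw [← reflect_pts_of_mem hp]
    exact inter_mem_left hσ
  by_cases hL' : ℓ.pts = L'.pts
  · rw [hL']
    exact inter_mem_right hσ
  obtain ⟨hL, hL', hsum⟩ :=
    h.of_crosses hchar ⟨hL, hL', fun hc => hLL' (hc.1.symm.trans hc.2)⟩
  rw [← eq_inter hσ (mem_reflect_of_add_eq hsum (inter_mem_right hL)) (inter_mem_right hL')]
  exact inter_mem_left hL'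

theorem Bisects.rotate (h : Bisects Q ℓ p) : Bisects Q.rotate ℓ p :=
  ⟨h.2, h.1.symm⟩

theorem Bisects.mem_pts (hchar : (2 : k) ≠ 0) (h : Bisects Q ℓ p) : p ∈ ℓ.pts := by
  by_cases hA : ℓ.Parallel Q.A
  · exact h.2.mem_pts_of_crosses hchar (crosses_of_not_parallel
      (fun hB => Q.adjAB (hA.symm.trans hB)) (fun hB' => Q.adjB'A (hA.symm.trans hB').symm))
  by_cases hA' : ℓ.Parallel Q.A'
  · exact h.2.mem_pts_of_crosses hchar (crosses_of_not_parallel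
      (fun hB => Q.adjBA' (hA'.symm.trans hB).symm) (fun hB' => Q.adjA'B' (hA'.symm.trans hB')))
  exact h.1.mem_pts_of_crosses hchar (crosses_of_not_parallel hA hA')

end Bisection

namespace Quadrilateral

variable {k : Type*} [Field k] {Q : Quadrilateral k} {ℓ ℓ' : Line k} {p : k × k}

theorem reflect_A_eq_of_parallel (hchar : (2 : k) ≠ 0) (hne : ℓ.pts ≠ ℓ'.pts)
    (hb : Bisects Q ℓ p) (hb' : Bisects Q ℓ' p) (hAA' : Q.A.Parallel Q.A') :
    (Q.A.reflect p).pts = Q.A'.pts := by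
  rcases hb.1.reflect_eq_or_parallel hchar hAA' with h | hℓ
  · exact h
  rcases hb'.1.reflect_eq_or_parallel hchar hAA' with h | hℓ'
  · exact h
  exact absurd (pts_eq_of_parallel_of_mem (hℓ.trans hℓ'.symm) (hb.mem_pts hchar)
    (hb'.mem_pts hchar)) hne

theorem mem_A_of_not_parallel (hchar : (2 : k) ≠ 0) (hne : ℓ.pts ≠ ℓ'.pts)
    (hb : Bisects Q ℓ p) (hb' : Bisects Q ℓ' p) (hAA' : ¬ Q.A.Parallel Q.A') :
    p ∈ Q.A.pts ∧ p ∈ Q.A'.pts := by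
  have hσ : ¬ (Q.A.reflect p).Parallel Q.A' :=
    fun h => hAA' ((reflect_parallel Q.A p).symm.trans h)
  -- Both bisectors pass through `p` and through `σ A ∩ A'`.
  have hX : (Q.A.reflect p).inter Q.A' = p := by
    by_contra hXp
    exact hne (pts_eq_of_mem_of_mem hXp
      (hb.1.reflect_inter_mem hchar (hb.mem_pts hchar) hAA') (hb.mem_pts hchar)
      (hb'.1.reflect_inter_mem hchar (hb'.mem_pts hchar) hAA') (hb'.mem_pts hchar))
  have hpA := inter_mem_left hσ
  rw [hX, mem_reflect_iff, two_smul, add_sub_cancel_right] at hpA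
  exact ⟨hpA, hX ▸ inter_mem_right hσ⟩

theorem reflect_A_eq_or_mem (hchar : (2 : k) ≠ 0) (hne : ℓ.pts ≠ ℓ'.pts)
    (hb : Bisects Q ℓ p) (hb' : Bisects Q ℓ' p) :
    (Q.A.reflect p).pts = Q.A'.pts ∨ p ∈ Q.A.pts ∧ p ∈ Q.A'.pts := by
  by_cases hAA' : Q.A.Parallel Q.A'
  · exact Or.inl (reflect_A_eq_of_parallel hchar hne hb hb' hAA')
  · exact Or.inr (mem_A_of_not_parallel hchar hne hb hb' hAA')

theorem parallelogram_centroid_of_reflect_A_of_reflect_B (hchar : (2 : k) ≠ 0)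
    (hA : (Q.A.reflect p).pts = Q.A'.pts) (hB : (Q.B.reflect p).pts = Q.B'.pts) :
    IsParallelogramVertices ({Q.v1, Q.v2, Q.v3, Q.v4} : Multiset (k × k)) ∧ p = Q.centroid := by
  have h13 : Q.v1 + Q.v3 = (2 : k) • p :=
    inter_add_inter_of_reflect hA hB Q.adjAB Q.adjA'B'
  have h24 : Q.v2 + Q.v4 = (2 : k) • p :=
    inter_add_inter_of_reflect hB (reflect_pts_symm hA) Q.adjBA' Q.adjB'A
  have h13_24 := h13.trans h24.symm
  refine Q.parallelogram_centroid_of_add_eq hchar rfl h13 h24 ?_ ?_ Q.v2_ne_v4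
  · refine fun h12 => Q.v3_ne_v4_of_v1_eq_v2 h12 (add_left_cancel (a := Q.v2) ?_)
    rwa [h12] at h13_24
  · refine fun h14 => Q.v2_ne_v3_of_v1_eq_v4 h14 (add_left_cancel (a := Q.v1) ?_).symm
    rw [h13_24, ← h14, add_comm]

theorem parallelogram_centroid_of_reflect_A_of_mem_B (hchar : (2 : k) ≠ 0)
    (hA : (Q.A.reflect p).pts = Q.A'.pts) (hpB : p ∈ Q.B.pts) (hpB' : p ∈ Q.B'.pts) :
    IsParallelogramVertices ({Q.v1, Q.v2, Q.v3, Q.v4} : Multiset (k × k)) ∧ p = Q.centroid := by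
  have h12 : Q.v1 + Q.v2 = (2 : k) • p := by
    rw [v2, inter_comm]
    exact inter_add_inter_of_reflect hA (reflect_pts_of_mem hpB) Q.adjAB
      (fun h => Q.adjBA' h.symm)
  have h34 : Q.v3 + Q.v4 = (2 : k) • p := by
    rw [v4, inter_comm]
    exact inter_add_inter_of_reflect (reflect_pts_symm hA) (reflect_pts_of_mem hpB') Q.adjA'B'
      (fun h => Q.adjB'A h.symm)
  have h12_34 := h12.trans h34.symm
  have hv : ({Q.v1, Q.v2, Q.v3, Q.v4} : Multiset (k × k)) = {Q.v1, Q.v3, Q.v2, Q.v4} := by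
    simp only [Multiset.insert_eq_cons, Multiset.cons_swap Q.v2 Q.v3]
  refine Q.parallelogram_centroid_of_add_eq hchar hv h12 h34 Q.v1_ne_v3 ?_ ?_
  · refine fun h14 => Q.v2_ne_v3_of_v1_eq_v4 h14 (add_left_cancel (a := Q.v1) ?_)
    rw [h12_34, ← h14, add_comm]
  · intro h
    have hv3 : Q.v3 = p := smul_right_injective _ hchar
      (show (2 : k) • Q.v3 = (2 : k) • p by rw [two_smul, ← h34, h])
    exact Q.notConcurrent
      ⟨p, hv3 ▸ h ▸ Q.v4_mem_A, hpB, hv3 ▸ Q.v3_mem_A', hv3 ▸ Q.v3_mem_B'⟩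

end Quadrilateral

/-- Proposition 3.5: if two distinct lines both bisect a quadrilateral `Q`
with the same midpoint `p`, then the vertices of `Q` are the vertices of a
parallelogram, and `p` is the centroid of `Q`. -/
theorem shared_midpoint_parallelogram {k : Type*} [Field k] (hchar : (2 : k) ≠ 0)
    (Q : Quadrilateral k) (ℓ ℓ' : Line k) (p : k × k)
    (hne : ℓ.pts ≠ ℓ'.pts)
    (hb : Bisects Q ℓ p) (hb' : Bisects Q ℓ' p) :
    IsParallelogramVertices ({Q.v1, Q.v2, Q.v3, Q.v4} : Multiset (k × k)) ∧
      p = Q.centroid := by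
  rcases Quadrilateral.reflect_A_eq_or_mem hchar hne hb hb' with hA | ⟨hpA, hpA'⟩ <;>
    rcases Quadrilateral.reflect_A_eq_or_mem hchar hne hb.rotate hb'.rotate with
      hB | ⟨hpB, hpB'⟩
  · exact Q.parallelogram_centroid_of_reflect_A_of_reflect_B hchar hA hB
  · exact Q.parallelogram_centroid_of_reflect_A_of_mem_B hchar hA hpB hpB'
  · simpa only [Q.vertices_rotate, Q.centroid_rotate] using
      Q.rotate.parallelogram_centroid_of_reflect_A_of_mem_B hchar hB hpA' hpA
  · exact absurd ⟨p, hpA, hpB, hpA', hpB'⟩ Q.notConcurrent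
end

section
/- Let k be a field with char k ≠ 2, let Q be a quadrilateral, and let f(x) = g(x) - g(a) be an affine transformation of k² with g an invertible linear map. Then there exists λ ∈ k, λ ≠ 0, such that for all v, w ∈ k²: ⟨v, w⟩_Q = λ⟨g(v), g(w)⟩_{g(Q)}. Consequently, a pair of lines ℓ₁, ℓ₂ is Q-orthogonal if and only if f(ℓ₁), f(ℓ₂) is f(Q)-orthogonal. -/
/-!
Writing `g` in coordinates as the matrix `[[p, q], [r, s]]`, the coefficients `α, β, γ` of
`g(Q)` are quartic in the transformed side directions, and a direct polynomial identity shows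
`⟨g v, g w⟩_{g(Q)} = (det g)³ ⟨v, w⟩_Q`. Hence `λ = (det g)⁻³` works, and it is nonzero because
`g` is invertible.
-/

/-- `α` of Definition 2.1 for the quadrilateral with side coefficients
`(t_A,u_A), (t_B,u_B), (t_{A'},u_{A'}), (t_{B'},u_{B'})`. -/
def alphaQ {k : Type*} [Field k] (tA uA tB uB tA' uA' tB' uB' : k) : k :=
  tA*uB*uA'*uB' - uA*tB*uA'*uB' + uA*uB*tA'*uB' - uA*uB*uA'*tB'

/-- `β` of Definition 2.1. -/
def betaQ {k : Type*} [Field k] (tA uA tB uB tA' uA' tB' uB' : k) : k :=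
  tA*uB*tA'*uB' - uA*tB*uA'*tB'

/-- `γ` of Definition 2.1. -/
def gammaQ {k : Type*} [Field k] (tA uA tB uB tA' uA' tB' uB' : k) : k :=
  tA*tB*tA'*uB' - tA*tB*uA'*tB' + tA*uB*tA'*tB' - uA*tB*tA'*tB'

/-- The inner product `⟨v,w⟩ = vᵀ [[γ,-β],[-β,α]] w` on `k²`, evaluated on
direction vectors `v = (u,t)` of lines. -/
def formQ {k : Type*} [Field k] (α β γ : k) (v w : k × k) : k :=
  γ * v.1 * w.1 - β * v.1 * w.2 - β * v.2 * w.1 + α * v.2 * w.2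

theorem LinearMap.exists_eq_toLin_finTwoProd {R : Type*} [CommSemiring R]
    (g : (R × R) →ₗ[R] (R × R)) :
    ∃ p q r s : R, g = Matrix.toLin (.finTwoProd R) (.finTwoProd R) !![p, q; r, s] :=
  ⟨_, _, _, _, by rw [← Matrix.eta_fin_two, Matrix.toLin_toMatrix]⟩

section

variable {k : Type*} [Field k]

/-- `⟨-,-⟩_Q` for the quadrilateral `Q` whose sides have direction vectors `(u, t)` equal to
`A, B, A', B'`. -/
def sideForm (A B A' B' : k × k) (v w : k × k) : k :=
  formQ (alphaQ A.2 A.1 B.2 B.1 A'.2 A'.1 B'.2 B'.1)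
    (betaQ A.2 A.1 B.2 B.1 A'.2 A'.1 B'.2 B'.1)
    (gammaQ A.2 A.1 B.2 B.1 A'.2 A'.1 B'.2 B'.1) v w

theorem sideForm_map (g : (k × k) →ₗ[k] (k × k)) (A B A' B' v w : k × k) :
    sideForm (g A) (g B) (g A') (g B') (g v) (g w) =
      LinearMap.det g ^ 3 * sideForm A B A' B' v w := by
  obtain ⟨p, q, r, s, rfl⟩ := g.exists_eq_toLin_finTwoProd
  simp only [LinearMap.det_toLin, Matrix.det_fin_two_of, Matrix.toLin_finTwoProd_apply,
    sideForm, formQ, alphaQ, betaQ, gammaQ]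
  ring

end

theorem form_transforms_general {k : Type*} [Field k]
    (tA uA tB uB tA' uA' tB' uB' : k)
    (g : (k × k) →ₗ[k] (k × k)) (hg : Function.Bijective g)
    (tA₁ uA₁ tB₁ uB₁ tA'₁ uA'₁ tB'₁ uB'₁ : k)
    (hgA : g (uA, tA) = (uA₁, tA₁)) (hgB : g (uB, tB) = (uB₁, tB₁))
    (hgA' : g (uA', tA') = (uA'₁, tA'₁)) (hgB' : g (uB', tB') = (uB'₁, tB'₁)) :
    ∃ lam : k, lam ≠ 0 ∧
      (∀ v w : k × k,
        formQ (alphaQ tA uA tB uB tA' uA' tB' uB')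
              (betaQ tA uA tB uB tA' uA' tB' uB')
              (gammaQ tA uA tB uB tA' uA' tB' uB') v w
        = lam * formQ (alphaQ tA₁ uA₁ tB₁ uB₁ tA'₁ uA'₁ tB'₁ uB'₁)
                      (betaQ tA₁ uA₁ tB₁ uB₁ tA'₁ uA'₁ tB'₁ uB'₁)
                      (gammaQ tA₁ uA₁ tB₁ uB₁ tA'₁ uA'₁ tB'₁ uB'₁) (g v) (g w)) ∧
      (∀ v w : k × k,
        formQ (alphaQ tA uA tB uB tA' uA' tB' uB')
              (betaQ tA uA tB uB tA' uA' tB' uB')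
              (gammaQ tA uA tB uB tA' uA' tB' uB') v w = 0 ↔
        formQ (alphaQ tA₁ uA₁ tB₁ uB₁ tA'₁ uA'₁ tB'₁ uB'₁)
              (betaQ tA₁ uA₁ tB₁ uB₁ tA'₁ uA'₁ tB'₁ uB'₁)
              (gammaQ tA₁ uA₁ tB₁ uB₁ tA'₁ uA'₁ tB'₁ uB'₁) (g v) (g w) = 0) := by
  have hdet : LinearMap.det g ^ 3 ≠ 0 :=
    pow_ne_zero _ (LinearMap.isUnit_det g ((Module.End.isUnit_iff g).mpr hg)).ne_zero
  have key (v w : k × k) := sideForm_map g (uA, tA) (uB, tB) (uA', tA') (uB', tB') v w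
  simp only [hgA, hgB, hgA', hgB', sideForm] at key
  refine ⟨(LinearMap.det g ^ 3)⁻¹, inv_ne_zero hdet, fun v w => ?_, fun v w => ?_⟩
  · rw [key, inv_mul_cancel_left₀ hdet]
  · rw [key, mul_eq_zero, or_iff_right hdet]

/-- Proposition 2.6: for a quadrilateral `Q` (adjacent sides not parallel) and
an invertible affine transformation `f(x) = g(x) - g(a)` with `g` linear and
bijective, there is `λ ≠ 0` in `k` with `⟨v,w⟩_Q = λ ⟨g(v), g(w)⟩_{f(Q)}` for
all `v, w ∈ k²` (the sides of `f(Q) = g(Q) + const` having direction vectors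
`g(u_L, t_L)`); consequently two lines are `Q`-orthogonal if and only if their
images under `f` are `f(Q)`-orthogonal. -/
theorem form_transforms {k : Type*} [Field k] (hchar : (2 : k) ≠ 0)
    (tA uA tB uB tA' uA' tB' uB' : k)
    (hAB : tA*uB - tB*uA ≠ 0) (hBA' : tB*uA' - tA'*uB ≠ 0)
    (hA'B' : tA'*uB' - tB'*uA' ≠ 0) (hB'A : tB'*uA - tA*uB' ≠ 0)
    (g : (k × k) →ₗ[k] (k × k)) (hg : Function.Bijective g)
    (a : k × k) (f : (k × k) → (k × k)) (hf : f = fun x => g x - g a)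
    (tA₁ uA₁ tB₁ uB₁ tA'₁ uA'₁ tB'₁ uB'₁ : k)
    (hgA : g (uA, tA) = (uA₁, tA₁)) (hgB : g (uB, tB) = (uB₁, tB₁))
    (hgA' : g (uA', tA') = (uA'₁, tA'₁)) (hgB' : g (uB', tB') = (uB'₁, tB'₁)) :
    ∃ lam : k, lam ≠ 0 ∧
      (∀ v w : k × k,
        formQ (alphaQ tA uA tB uB tA' uA' tB' uB')
              (betaQ tA uA tB uB tA' uA' tB' uB')
              (gammaQ tA uA tB uB tA' uA' tB' uB') v w
        = lam * formQ (alphaQ tA₁ uA₁ tB₁ uB₁ tA'₁ uA'₁ tB'₁ uB'₁)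
                      (betaQ tA₁ uA₁ tB₁ uB₁ tA'₁ uA'₁ tB'₁ uB'₁)
                      (gammaQ tA₁ uA₁ tB₁ uB₁ tA'₁ uA'₁ tB'₁ uB'₁) (g v) (g w)) ∧
      (∀ v w : k × k,
        formQ (alphaQ tA uA tB uB tA' uA' tB' uB')
              (betaQ tA uA tB uB tA' uA' tB' uB')
              (gammaQ tA uA tB uB tA' uA' tB' uB') v w = 0 ↔
        formQ (alphaQ tA₁ uA₁ tB₁ uB₁ tA'₁ uA'₁ tB'₁ uB'₁)
              (betaQ tA₁ uA₁ tB₁ uB₁ tA'₁ uA'₁ tB'₁ uB'₁)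
              (gammaQ tA₁ uA₁ tB₁ uB₁ tA'₁ uA'₁ tB'₁ uB'₁) (g v) (g w) = 0) :=
  form_transforms_general tA uA tB uB tA' uA' tB' uB' g hg tA₁ uA₁ tB₁ uB₁ tA'₁ uA'₁ tB'₁ uB'₁ hgA
    hgB hgA' hgB'
end
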